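/- arXiv:1208.6240 — 3 statements merged into one kernel-verified Lean document; each statement's English description precedes it below -/
import Mathlib

section
/- On the elliptic curve E over ℚ(s) given by y² + (s²-6s+1)xy = x(x - s⁴)(x + s² - 6s³), the point P = (s²(6s-1), 0) has order exactly 6, and the point (0,0) has order exactly 2. -/
/-!
Over any field, the curve `y² + a xy = x (x - l²) (x - l (l + a))` meets the line `y = 0` in
`P = (l (l + a), 0)`, `(l², 0)` and `(0, 0)`, and its tangent at `P` has slope `l`, which forces
`2P = (l², 0)`. Collinearity on `y = 0` then gives `3P = -(0, 0) = (0, 0)`, a point of order `2`,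
so `P` has order `6`. The curve `W6` is the case `a = s² - 6s + 1`, `l = -s²`.
-/

open WeierstrassCurve

/-- The elliptic surface `Y₆` around `s = 0`:
`y² + (s²-6s+1)xy = x(x - s⁴)(x + s² - 6s³)` over `ℚ(s)`. -/
noncomputable def W6 : WeierstrassCurve.Affine (RatFunc ℚ) where
  a₁ := RatFunc.X ^ 2 - 6 * RatFunc.X + 1
  a₂ := RatFunc.X ^ 2 - 6 * RatFunc.X ^ 3 - RatFunc.X ^ 4
  a₃ := 0
  a₄ := -RatFunc.X ^ 6 + 6 * RatFunc.X ^ 7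
  a₆ := 0

theorem addOrderOf_eq_six {G : Type*} [AddMonoid G] {x : G} (h6 : 6 • x = 0) (h3 : 3 • x ≠ 0)
    (h2 : 2 • x ≠ 0) : addOrderOf x = 6 := by
  refine addOrderOf_eq_of_nsmul_and_div_prime_nsmul (by norm_num) h6 fun p hp hdvd => ?_
  have hp6 : p ≤ 6 := Nat.le_of_dvd (by norm_num) hdvd
  interval_cases p <;> simp_all +decide

theorem RatFunc.algebraMap_ne_zero_of_eval_zero_ne_zero {K : Type*} [CommRing K] [IsDomain K]
    {p : Polynomial K} (h : p.eval 0 ≠ 0) : algebraMap (Polynomial K) (RatFunc K) p ≠ 0 :=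
  RatFunc.algebraMap_ne_zero fun hp => h (by rw [hp, Polynomial.eval_zero])

namespace WeierstrassCurve.Affine

variable {F : Type*} [Field F]

theorem Point.addOrderOf_some_of_Y_eq_negY [DecidableEq F] {W : Affine F} {x y : F}
    {h : W.Nonsingular x y} (hy : y = W.negY x y) : addOrderOf (Point.some _ _ h) = 2 :=
  addOrderOf_eq_prime (by rw [two_nsmul, Point.add_self_of_Y_eq hy]) (Point.some_ne_zero h)

/-- `y² + a xy = x (x - l²) (x - l (l + a))`. -/
def sixTorsionCurve (a l : F) : Affine F where
  a₁ := a
  a₂ := -(l ^ 2 + l * (l + a))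
  a₃ := 0
  a₄ := l ^ 2 * (l * (l + a))
  a₆ := 0

namespace sixTorsionCurve

variable {a l : F}

theorem nonsingular_of_Y_eq_zero {x : F} (hx : x * (x - l ^ 2) * (x - l * (l + a)) = 0)
    (hax : a * x ≠ 0) : (sixTorsionCurve a l).Nonsingular x 0 := by
  rw [nonsingular_iff', equation_iff']
  refine ⟨by simp only [sixTorsionCurve]; linear_combination -hx, Or.inr ?_⟩
  simpa [sixTorsionCurve] using hax

theorem nonsingular_mul_add (ha : a ≠ 0) (hl : l ≠ 0) (hla : l + a ≠ 0) :
    (sixTorsionCurve a l).Nonsingular (l * (l + a)) 0 :=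
  nonsingular_of_Y_eq_zero (by ring) (mul_ne_zero ha (mul_ne_zero hl hla))

theorem nonsingular_sq (ha : a ≠ 0) (hl : l ≠ 0) :
    (sixTorsionCurve a l).Nonsingular (l ^ 2) 0 :=
  nonsingular_of_Y_eq_zero (by ring) (mul_ne_zero ha (pow_ne_zero 2 hl))

theorem nonsingular_zero_zero (hl : l ≠ 0) (hla : l + a ≠ 0) :
    (sixTorsionCurve a l).Nonsingular 0 0 :=
  nonsingular_zero.2 ⟨rfl, Or.inr (mul_ne_zero (pow_ne_zero 2 hl) (mul_ne_zero hl hla))⟩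

variable [DecidableEq F]

theorem two_nsmul_some (ha : a ≠ 0) (hl : l ≠ 0) (hla : l + a ≠ 0) :
    2 • Point.some _ _ (nonsingular_mul_add ha hl hla) =
      Point.some _ _ (nonsingular_sq ha hl) := by
  have hy : 0 ≠ (sixTorsionCurve a l).negY (l * (l + a)) 0 := by
    simpa [negY, sixTorsionCurve] using (mul_ne_zero ha (mul_ne_zero hl hla)).symm
  have hslope : (sixTorsionCurve a l).slope (l * (l + a)) (l * (l + a)) 0 0 = l := by
    rw [slope_of_Y_ne rfl hy, div_eq_iff (sub_ne_zero.2 hy)]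
    simp only [negY, sixTorsionCurve]
    ring
  rw [two_nsmul, Point.add_self_of_Y_ne hy, Point.some.injEq, addY, negAddY, negY, addX, hslope]
  simp only [sixTorsionCurve]
  constructor <;> ring

theorem three_nsmul_some (ha : a ≠ 0) (hl : l ≠ 0) (hla : l + a ≠ 0) :
    3 • Point.some _ _ (nonsingular_mul_add ha hl hla) =
      Point.some _ _ (nonsingular_zero_zero hl hla) := by
  have hx : l ^ 2 ≠ l * (l + a) := fun h => mul_ne_zero hl ha (by linear_combination -h)
  rw [succ_nsmul, two_nsmul_some ha hl hla, Point.add_of_X_ne hx, Point.some.injEq, addY, negAddY,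
    negY, addX, slope_of_X_ne hx, sub_self, zero_div]
  simp only [sixTorsionCurve]
  constructor <;> ring

theorem addOrderOf_some_zero_zero (hl : l ≠ 0) (hla : l + a ≠ 0) :
    addOrderOf (Point.some _ _ (nonsingular_zero_zero hl hla)) = 2 :=
  Point.addOrderOf_some_of_Y_eq_negY (by simp [negY, sixTorsionCurve])

theorem addOrderOf_some_mul_add (ha : a ≠ 0) (hl : l ≠ 0) (hla : l + a ≠ 0) :
    addOrderOf (Point.some _ _ (nonsingular_mul_add ha hl hla)) = 6 := by
  have h3 := three_nsmul_some ha hl hla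
  refine addOrderOf_eq_six ?_ (h3 ▸ Point.some_ne_zero _)
    (two_nsmul_some ha hl hla ▸ Point.some_ne_zero _)
  rw [show 6 = 3 * 2 from rfl, mul_nsmul, h3, ← addOrderOf_some_zero_zero hl hla,
    addOrderOf_nsmul_eq_zero]

end sixTorsionCurve

end WeierstrassCurve.Affine

theorem W6_eq_sixTorsionCurve :
    W6 = Affine.sixTorsionCurve (RatFunc.X ^ 2 - 6 * RatFunc.X + 1) (-RatFunc.X ^ 2) := by
  ext <;> simp only [W6, Affine.sixTorsionCurve] <;> ring

open Classical in
/-- On `W6`, the point `(s²(6s-1), 0)` has order exactly `6` and `(0,0)` has order exactly `2`. -/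
theorem W6_torsion_points :
    (∃ h : W6.Nonsingular (RatFunc.X ^ 2 * (6 * RatFunc.X - 1)) 0,
      addOrderOf (WeierstrassCurve.Affine.Point.some _ _ h) = 6) ∧
    ∃ h' : W6.Nonsingular 0 0, addOrderOf (WeierstrassCurve.Affine.Point.some _ _ h') = 2 := by
  have ha : (RatFunc.X ^ 2 - 6 * RatFunc.X + 1 : RatFunc ℚ) ≠ 0 := by
    convert RatFunc.algebraMap_ne_zero_of_eval_zero_ne_zero
      (K := ℚ) (p := Polynomial.X ^ 2 - 6 * Polynomial.X + 1) (by norm_num) using 1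
    simp [map_ofNat]
  have hl : (-RatFunc.X ^ 2 : RatFunc ℚ) ≠ 0 := neg_ne_zero.2 (pow_ne_zero 2 RatFunc.X_ne_zero)
  have hla : (-RatFunc.X ^ 2 + (RatFunc.X ^ 2 - 6 * RatFunc.X + 1) : RatFunc ℚ) ≠ 0 := by
    convert RatFunc.algebraMap_ne_zero_of_eval_zero_ne_zero
      (K := ℚ) (p := 1 - 6 * Polynomial.X) (by norm_num) using 1
    simp only [map_sub, map_one, map_mul, map_ofNat, RatFunc.algebraMap_X]
    ring
  rw [W6_eq_sixTorsionCurve, show (RatFunc.X ^ 2 * (6 * RatFunc.X - 1) : RatFunc ℚ) =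
    -RatFunc.X ^ 2 * (-RatFunc.X ^ 2 + (RatFunc.X ^ 2 - 6 * RatFunc.X + 1)) by ring]
  exact ⟨⟨_, Affine.sixTorsionCurve.addOrderOf_some_mul_add ha hl hla⟩,
    ⟨_, Affine.sixTorsionCurve.addOrderOf_some_zero_zero hl hla⟩⟩
end

section
/- The point p_{-3} = (x_{-3}(σ), y_{-3}(σ)) with x_{-3}(σ) = -2⁴·3⁶·σ(σ-18)(σ-21)²(σ+3)² / [(σ-9)²(σ²-21σ+72)²(σ²-15σ+18)²] and y_{-3}(σ) as given lies on the elliptic curve Y_{-3}: y² + (σ²-18σ+1)xy = x³ + (-σ⁴ + 36σ³ - 329σ² + 90σ + 2)x² + 9σ(-σ+18)x over ℚ(σ). -/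
open WeierstrassCurve

/-- The quadratic twist by `-3` of the elliptic surface `Y₁₈`:
`y² + (σ²-18σ+1)xy = x³ + (-σ⁴ + 36σ³ - 329σ² + 90σ + 2)x² + 9σ(-σ+18)x` over `ℚ(σ)`. -/
noncomputable def Wtw : WeierstrassCurve.Affine (RatFunc ℚ) where
  a₁ := RatFunc.X ^ 2 - 18 * RatFunc.X + 1
  a₂ := -RatFunc.X ^ 4 + 36 * RatFunc.X ^ 3 - 329 * RatFunc.X ^ 2 + 90 * RatFunc.X + 2
  a₃ := 0
  a₄ := 9 * RatFunc.X * (-RatFunc.X + 18)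
  a₆ := 0

local notation "σ" => (RatFunc.X : RatFunc ℚ)

/-!
Writing `p_{-3} = (X / Z², Y / Z³)` with `Z = (σ-9)(σ²-21σ+72)(σ²-15σ+18)`, the point lies on the
curve iff `[X : Y : Z]` satisfies the weighted-homogeneous (Jacobian) equation, which is a polynomial
identity in `σ`; the only other input is `Z ≠ 0`, as `σ` is transcendental over `ℚ`.
-/

open Polynomial in
lemma RatFunc.aeval_X_ne_zero {K : Type*} [CommRing K] [IsDomain K] {p : K[X]} (hp : p ≠ 0) :
    aeval (RatFunc.X : RatFunc K) p ≠ 0 :=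
  fun h => RatFunc.transcendental_X ⟨p, hp, h⟩

noncomputable section

namespace Wtw

def pNeg3X : RatFunc ℚ := -(2 ^ 4 * 3 ^ 6 * σ * (σ - 18) * (σ - 21) ^ 2 * (σ + 3) ^ 2)

def pNeg3Y : RatFunc ℚ := -(2 ^ 2 * 3 ^ 4 * σ * (σ - 18) * (σ - 21) * (σ + 3)) *
  (σ ^ 10 - 108 * σ ^ 9 + 4455 * σ ^ 8 - 87822 * σ ^ 7 + 771363 * σ ^ 6 -
    294840 * σ ^ 5 - 44001711 * σ ^ 4 + 281168010 * σ ^ 3 - 545848956 * σ ^ 2 +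
    132322248 * σ + 128490624)

def pNeg3Z : RatFunc ℚ := (σ - 9) * (σ ^ 2 - 21 * σ + 72) * (σ ^ 2 - 15 * σ + 18)

open Polynomial in
lemma pNeg3Z_ne_zero : pNeg3Z ≠ 0 := by
  have hp : (X - 9) * (X ^ 2 - 21 * X + 72) * (X ^ 2 - 15 * X + 18 : ℚ[X]) ≠ 0 := fun h => by
    simpa using congrArg (eval 0) h
  simpa [pNeg3Z, map_ofNat] using RatFunc.aeval_X_ne_zero hp

lemma jacobian_equation_pNeg3 : Wtw.toJacobian.Equation ![pNeg3X, pNeg3Y, pNeg3Z] := by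
  rw [Jacobian.equation_iff]
  simp only [Wtw, pNeg3X, pNeg3Y, pNeg3Z, Matrix.cons_val]
  ring

lemma equation_pNeg3 : Wtw.Equation (pNeg3X / pNeg3Z ^ 2) (pNeg3Y / pNeg3Z ^ 3) :=
  (Jacobian.equation_of_Z_ne_zero pNeg3Z_ne_zero).mp jacobian_equation_pNeg3

end Wtw

end

/-- The point `p_{-3} = (x_{-3}(σ), y_{-3}(σ))` lies on the twisted curve `Y_{-3}`. -/
theorem p_neg3_on_twist :
    Wtw.Equation
      (-(2 ^ 4 * 3 ^ 6 * σ * (σ - 18) * (σ - 21) ^ 2 * (σ + 3) ^ 2) /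
        ((σ - 9) ^ 2 * (σ ^ 2 - 21 * σ + 72) ^ 2 * (σ ^ 2 - 15 * σ + 18) ^ 2))
      (-(2 ^ 2 * 3 ^ 4 * σ * (σ - 18) * (σ - 21) * (σ + 3)) /
          ((σ - 9) ^ 3 * (σ ^ 2 - 21 * σ + 72) ^ 3 * (σ ^ 2 - 15 * σ + 18) ^ 3) *
        (σ ^ 10 - 108 * σ ^ 9 + 4455 * σ ^ 8 - 87822 * σ ^ 7 + 771363 * σ ^ 6 -
          294840 * σ ^ 5 - 44001711 * σ ^ 4 + 281168010 * σ ^ 3 - 545848956 * σ ^ 2 +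
          132322248 * σ + 128490624)) := by
  convert Wtw.equation_pNeg3 using 2 <;>
    simp only [Wtw.pNeg3X, Wtw.pNeg3Y, Wtw.pNeg3Z, mul_pow, div_mul_eq_mul_div]
end

section
/- Let E: y² = x(x² + ax + b) be an elliptic curve over a field K of characteristic ≠ 2 with a² - 4b not a square in K*. Let Q = (x₀, y₀) ∈ E(K) with x₀ ≠ 0. Then Q = 2P for some P ∈ E(K) if and only if x₀ is a square in K*, say x₀ = r², and at least one of q_± = 2x₀ + a ± 2y₀/r is a square in K*. -/
open WeierstrassCurve

/-!
Write `P = (x, y)` with `y ≠ 0` as `y = t x` and `x² - b = 2 y r`. On the curve this forces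
`a = t² - 2x + 2tr` and `b = x² - 2txr`; then the tangent at `P` has slope `t + r`, and
`2P = (r², y₀)` with `2y₀ = r(t² - 2r² - a)`, i.e. `2x₀ + a + 2y₀/r = t²`. Conversely, given `r`
and `t`, the equation of `Q` forces `4b = (t² - a)² - 4r²t²`, so `x = (t² - a)/2 + rt` and
`y = t x` recover a point `P` with `2P = Q`; replacing `r` by `-r` exchanges `q₊` and `q₋`.
-/

namespace WeierstrassCurve.Affine

variable {K : Type*} [Field K] {a b : K}

def twoTorsionModel (a b : K) : Affine K :=
  { a₁ := 0, a₂ := a, a₃ := 0, a₄ := b, a₆ := 0 }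

lemma twoTorsionModel_equation_iff {x y : K} :
    (twoTorsionModel a b).Equation x y ↔ y ^ 2 = x ^ 3 + a * x ^ 2 + b * x := by
  rw [equation_iff]
  simp only [twoTorsionModel]
  constructor <;> intro h <;> linear_combination h

lemma twoTorsionModel_negY (x y : K) : (twoTorsionModel a b).negY x y = -y := by
  simp [negY, twoTorsionModel]

lemma twoTorsionModel_Δ : (twoTorsionModel a b).Δ = 16 * b ^ 2 * (a ^ 2 - 4 * b) := by
  simp only [twoTorsionModel, WeierstrassCurve.Δ, b₂, b₄, b₆, b₈]
  ring

lemma twoTorsionModel_nonsingular_iff (h2 : (2 : K) ≠ 0) (hb : b * (a ^ 2 - 4 * b) ≠ 0)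
    {x y : K} :
    (twoTorsionModel a b).Nonsingular x y ↔ y ^ 2 = x ^ 3 + a * x ^ 2 + b * x := by
  have hΔ : (twoTorsionModel a b).Δ ≠ 0 := by
    rw [twoTorsionModel_Δ, show (16 : K) = 2 ^ 4 by norm_num]
    exact mul_ne_zero (mul_ne_zero (pow_ne_zero 4 h2) (pow_ne_zero 2 (left_ne_zero_of_mul hb)))
      (right_ne_zero_of_mul hb)
  rw [← equation_iff_nonsingular_of_Δ_ne_zero hΔ, twoTorsionModel_equation_iff]

lemma twoTorsionModel_two_nsmul_some_eq_some_iff [DecidableEq K] (h2 : (2 : K) ≠ 0)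
    {x y x₀ y₀ r t : K} (h : (twoTorsionModel a b).Nonsingular x y)
    (hQ : (twoTorsionModel a b).Nonsingular x₀ y₀) (hy : y ≠ 0)
    (ht : y = t * x) (hr : x ^ 2 - b = 2 * y * r) :
    2 • Point.some x y h = Point.some x₀ y₀ hQ ↔
      x₀ = r ^ 2 ∧ 2 * y₀ = (t ^ 2 - (2 * x₀ + a)) * r := by
  subst ht
  have hx : x ≠ 0 := right_ne_zero_of_mul hy
  have ha : a = t ^ 2 - 2 * x + 2 * t * r := by
    have hxy := twoTorsionModel_equation_iff.1 h.1
    apply mul_left_cancel₀ (pow_ne_zero 2 hx)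
    linear_combination (-1 : K) * hxy + x * hr
  have hY : t * x ≠ (twoTorsionModel a b).negY x (t * x) := by
    rw [twoTorsionModel_negY]
    intro h'
    exact hy ((mul_eq_zero.1 (by linear_combination h' : 2 * (t * x) = 0)).resolve_left h2)
  have hslope : (twoTorsionModel a b).slope x x (t * x) (t * x) = t + r := by
    rw [slope_of_Y_ne rfl hY, twoTorsionModel_negY, div_eq_iff (by rwa [sub_neg_eq_add, ← two_mul,
      mul_ne_zero_iff, and_iff_right h2])]
    simp only [twoTorsionModel]
    linear_combination 2 * x * ha - hr
  rw [two_nsmul, Point.add_self_of_Y_ne hY, Point.some.injEq, addY, negAddY, hslope,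
    twoTorsionModel_negY]
  simp only [addX, twoTorsionModel]
  subst ha
  constructor
  · rintro ⟨rfl, rfl⟩
    constructor <;> ring
  · rintro ⟨rfl, hy₀⟩
    exact ⟨by ring, mul_left_cancel₀ h2 (by linear_combination (-1 : K) * hy₀)⟩

lemma twoTorsionModel_exists_of_two_nsmul_eq_some [DecidableEq K] (h2 : (2 : K) ≠ 0)
    {x₀ y₀ : K} {hQ : (twoTorsionModel a b).Nonsingular x₀ y₀} {P : (twoTorsionModel a b).Point}
    (hP : 2 • P = Point.some x₀ y₀ hQ) :
    ∃ r t : K, x₀ = r ^ 2 ∧ 2 * y₀ = (t ^ 2 - (2 * x₀ + a)) * r := by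
  cases P with
  | zero =>
    rw [← Point.zero_def, smul_zero] at hP
    exact absurd hP.symm (Point.some_ne_zero hQ)
  | @some x y h =>
    by_cases hy : y = 0
    · subst hy
      rw [two_nsmul, Point.add_self_of_Y_eq (by rw [twoTorsionModel_negY, neg_zero])] at hP
      exact absurd hP.symm (Point.some_ne_zero hQ)
    have hx : x ≠ 0 := by
      rintro rfl
      have hxy := twoTorsionModel_equation_iff.1 h.1
      exact hy (pow_eq_zero_iff two_ne_zero |>.1 (by linear_combination hxy))
    exact ⟨_, _, (twoTorsionModel_two_nsmul_some_eq_some_iff h2 h hQ hy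
      (div_mul_cancel₀ y hx).symm (mul_div_cancel₀ _ (mul_ne_zero h2 hy)).symm).1 hP⟩

lemma twoTorsionModel_exists_two_nsmul_eq_some [DecidableEq K] (h2 : (2 : K) ≠ 0)
    (hb : b * (a ^ 2 - 4 * b) ≠ 0) {x₀ y₀ r t : K} (hQ : (twoTorsionModel a b).Nonsingular x₀ y₀)
    (hx₀ : x₀ = r ^ 2) (hr : r ≠ 0) (hy₀ : 2 * y₀ = (t ^ 2 - (2 * x₀ + a)) * r) :
    ∃ P : (twoTorsionModel a b).Point, 2 • P = Point.some x₀ y₀ hQ := by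
  subst hx₀
  obtain ⟨x, hx⟩ : ∃ x : K, 2 * x = t ^ 2 - a + 2 * r * t :=
    ⟨_, mul_div_cancel₀ _ h2⟩
  have hbx : b = x ^ 2 - 2 * t * x * r := by
    have hQeq := (twoTorsionModel_nonsingular_iff h2 hb).1 hQ
    apply mul_left_cancel₀ (pow_ne_zero 2 (mul_ne_zero h2 hr))
    linear_combination -4 * hQeq + (2 * y₀ + (t ^ 2 - 2 * r ^ 2 - a) * r) * hy₀
      - r ^ 2 * (2 * x - 2 * r * t + t ^ 2 - a) * hx
  have hx0 : x ≠ 0 := by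
    rintro rfl
    exact left_ne_zero_of_mul hb (by linear_combination hbx)
  have ht0 : t ≠ 0 := by
    rintro rfl
    exact right_ne_zero_of_mul hb (by linear_combination (a - 2 * x) * hx - 4 * hbx)
  have hP : (twoTorsionModel a b).Nonsingular x (t * x) :=
    (twoTorsionModel_nonsingular_iff h2 hb).2 (by linear_combination (-x ^ 2) * hx - x * hbx)
  exact ⟨_, (twoTorsionModel_two_nsmul_some_eq_some_iff h2 hP hQ (mul_ne_zero ht0 hx0) rfl
    (by linear_combination -hbx)).2 ⟨rfl, hy₀⟩⟩

end WeierstrassCurve.Affine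

open Classical in
theorem halving_criterion_general {K : Type*} [Field K] (hchar : (2 : K) ≠ 0) (a b : K)
    (hb : b * (a ^ 2 - 4 * b) ≠ 0)
    (W : WeierstrassCurve.Affine K)
    (hW : W = { a₁ := 0, a₂ := a, a₃ := 0, a₄ := b, a₆ := 0 })
    (x₀ y₀ : K) (hx₀ : x₀ ≠ 0) (hQ : W.Nonsingular x₀ y₀) :
    (∃ P : W.Point, 2 • P = WeierstrassCurve.Affine.Point.some x₀ y₀ hQ) ↔
      ∃ r : K, x₀ = r ^ 2 ∧
        (IsSquare (2 * x₀ + a + 2 * y₀ / r) ∨ IsSquare (2 * x₀ + a - 2 * y₀ / r)) := by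
  subst hW
  have hr0 {r : K} (hr : x₀ = r ^ 2) : r ≠ 0 := by
    rintro rfl
    simp [hr] at hx₀
  have hq {r t : K} (hr : x₀ = r ^ 2) :
      2 * x₀ + a + 2 * y₀ / r = t ^ 2 ↔ 2 * y₀ = (t ^ 2 - (2 * x₀ + a)) * r := by
    rw [← eq_sub_iff_add_eq', div_eq_iff (hr0 hr)]
  simp only [isSquare_iff_exists_sq]
  constructor
  · rintro ⟨P, hP⟩
    obtain ⟨r, t, hr, hy₀⟩ := Affine.twoTorsionModel_exists_of_two_nsmul_eq_some hchar hP
    exact ⟨r, hr, .inl ⟨t, (hq hr).2 hy₀⟩⟩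
  · rintro ⟨r, hr, ⟨t, ht⟩ | ⟨t, ht⟩⟩
    · exact Affine.twoTorsionModel_exists_two_nsmul_eq_some hchar hb hQ hr
        (hr0 hr) ((hq hr).1 ht)
    · have hr' : x₀ = (-r) ^ 2 := by rw [hr, neg_sq]
      refine Affine.twoTorsionModel_exists_two_nsmul_eq_some hchar hb hQ hr'
        (hr0 hr') ((hq (t := t) hr').1 ?_)
      rwa [div_neg, ← sub_eq_add_neg]

open Classical in
/-- Halving criterion: on `E : y² = x(x² + ax + b)` over a field `K` with `char K ≠ 2`,
`b(a²-4b) ≠ 0` and `a² - 4b` not a square in `K`, a point `Q = (x₀, y₀)` with `x₀ ≠ 0`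
is `2P` for some `P ∈ E(K)` iff `x₀ = r²` is a square and one of `q± = 2x₀ + a ± 2y₀/r`
is a square in `K`. -/
theorem halving_criterion {K : Type*} [Field K] (hchar : (2 : K) ≠ 0) (a b : K)
    (hb : b * (a ^ 2 - 4 * b) ≠ 0) (hd : ¬ IsSquare (a ^ 2 - 4 * b))
    (W : WeierstrassCurve.Affine K)
    (hW : W = { a₁ := 0, a₂ := a, a₃ := 0, a₄ := b, a₆ := 0 })
    (x₀ y₀ : K) (hx₀ : x₀ ≠ 0) (hQ : W.Nonsingular x₀ y₀) :
    (∃ P : W.Point, 2 • P = WeierstrassCurve.Affine.Point.some x₀ y₀ hQ) ↔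
      ∃ r : K, x₀ = r ^ 2 ∧
        (IsSquare (2 * x₀ + a + 2 * y₀ / r) ∨ IsSquare (2 * x₀ + a - 2 * y₀ / r)) :=
  halving_criterion_general hchar a b hb W hW x₀ y₀ hx₀ hQ
end
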